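/- arXiv:2204.01962 — 3 statements merged into one kernel-verified Lean document; each statement's English description precedes it below -/
import Mathlib

section
/- Let p be a deterministic item pricing for a unit-demand buyer with a finite-support value distribution D, with all items available, and let x* ∈ [0,1]^m be its allocation vector (x*_j = probability item j is sold). For every vector y ∈ [0,1]^m with y_j ≤ x*_j for all j, there exists a randomized item pricing q (a finite distribution over item pricings, each obtained from p by restricting to a subset of items, i.e., setting some prices to +∞) whose expected allocation vector equals y and whose expected revenue equals the inner product y · p. -/
open scoped Classical

/-- `Buys v p T j` : a unit-demand buyer of type `v`, facing item prices `p` with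
available item set `T`, purchases item `j` (least-index maximizer of `v k - p k` over
`T`, provided the maximum utility is nonnegative). -/
def Buys {m : ℕ} (v p : Fin m → ℝ) (T : Finset (Fin m)) (j : Fin m) : Prop :=
  j ∈ T ∧ 0 ≤ v j - p j ∧ ∀ k ∈ T, v k - p k < v j - p j ∨ (v k - p k = v j - p j ∧ j ≤ k)

/-- Probability that item `j` is sold under pricing `p` restricted to available set `T`. -/
noncomputable def allocD {m k : ℕ} (V : Fin k → Fin m → ℝ) (w : Fin k → ℝ)
    (p : Fin m → ℝ) (T : Finset (Fin m)) (j : Fin m) : ℝ :=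
  ∑ t, w t * (if Buys (V t) p T j then (1 : ℝ) else 0)

/-- Expected revenue of pricing `p` restricted to available set `T`. -/
noncomputable def revD {m k : ℕ} (V : Fin k → Fin m → ℝ) (w : Fin k → ℝ)
    (p : Fin m → ℝ) (T : Finset (Fin m)) : ℝ :=
  ∑ t, w t * ∑ j, (if Buys (V t) p T j then p j else 0)

/-!
The allocation vectors `x_T` of the restricted pricings `p_T` form a finite family in `ℝ^m`,
so it suffices to show that `y` lies in their convex hull, i.e. that no linear functional `f`
separates `y` from all of them. Given `f`, take `T` to be the set of items on which `f` has a
negative coefficient: on `T` we have `x_T ≥ x* ≥ y` (removing items can only help the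
remaining ones), and off `T` we have `x_T = 0 ≤ y`, so `f (x_T) ≤ f y`. The revenue identity is
then linear, since `p_T` earns `p_j` whenever it sells item `j`.
-/

section ConvexHull

variable {ι E : Type*} [Fintype ι]

theorem exists_weights_of_mem_convexHull_range [AddCommGroup E] [Module ℝ E] {g : ι → E} {y : E}
    (hy : y ∈ convexHull ℝ (Set.range g)) :
    ∃ c : ι → ℝ, (∀ i, 0 ≤ c i) ∧ ∑ i, c i = 1 ∧ ∑ i, c i • g i = y := by
  rw [convexHull_range_eq_exists_affineCombination] at hy
  obtain ⟨s, c, hc0, hc1, rfl⟩ := hy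
  have hc1' : ∑ i, (s : Set ι).indicator c i = 1 := by
    rwa [Finset.sum_indicator_subset _ s.subset_univ]
  refine ⟨(s : Set ι).indicator c, fun i => Set.indicator_nonneg hc0 i, hc1', ?_⟩
  rw [Finset.affineCombination_indicator_subset _ _ s.subset_univ,
    Finset.affineCombination_eq_linear_combination _ _ _ hc1']

theorem mem_convexHull_range_of_forall_exists_le [TopologicalSpace E] [AddCommGroup E]
    [IsTopologicalAddGroup E] [Module ℝ E] [ContinuousSMul ℝ E] [LocallyConvexSpace ℝ E]
    [T2Space E] {g : ι → E} {y : E} (h : ∀ f : StrongDual ℝ E, ∃ i, f (g i) ≤ f y) :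
    y ∈ convexHull ℝ (Set.range g) := by
  by_contra hy
  obtain ⟨f, u, hfy, hfg⟩ := geometric_hahn_banach_point_closed (convex_convexHull ℝ _)
    ((Set.finite_range g).isClosed_convexHull (𝕜 := ℝ)) hy
  obtain ⟨i, hi⟩ := h f
  linarith [hfg (g i) (subset_convexHull ℝ _ (Set.mem_range_self i))]

end ConvexHull

theorem Buys.of_subset {m : ℕ} {v p : Fin m → ℝ} {T T' : Finset (Fin m)} {j : Fin m}
    (h : Buys v p T' j) (hTT' : T ⊆ T') (hj : j ∈ T) : Buys v p T j :=
  ⟨hj, h.2.1, fun k hk => h.2.2 k (hTT' hk)⟩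

section Pricing

variable {m k : ℕ} (V : Fin k → Fin m → ℝ) (w : Fin k → ℝ) (p : Fin m → ℝ)

theorem allocD_eq_zero_of_notMem {T : Finset (Fin m)} {j : Fin m} (hj : j ∉ T) :
    allocD V w p T j = 0 :=
  Finset.sum_eq_zero fun t _ => by rw [if_neg fun h => hj h.1, mul_zero]

theorem allocD_univ_le (hw : ∀ t, 0 ≤ w t) {T : Finset (Fin m)} {j : Fin m} (hj : j ∈ T) :
    allocD V w p Finset.univ j ≤ allocD V w p T j := by
  refine Finset.sum_le_sum fun t _ => mul_le_mul_of_nonneg_left ?_ (hw t)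
  by_cases h : Buys (V t) p Finset.univ j
  · rw [if_pos h, if_pos (h.of_subset T.subset_univ hj)]
  · rw [if_neg h]
    split_ifs <;> norm_num

theorem revD_eq_sum_allocD_mul (T : Finset (Fin m)) :
    revD V w p T = ∑ j, allocD V w p T j * p j := by
  simp only [revD, allocD, Finset.mul_sum, Finset.sum_mul]
  rw [Finset.sum_comm]
  refine Finset.sum_congr rfl fun t _ => Finset.sum_congr rfl fun j _ => ?_
  split_ifs <;> ring

theorem exists_allocD_le_of_le_allocD_univ (hw : ∀ t, 0 ≤ w t) {y : Fin m → ℝ}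
    (hy0 : ∀ j, 0 ≤ y j) (hyx : ∀ j, y j ≤ allocD V w p Finset.univ j)
    (f : (Fin m → ℝ) →ₗ[ℝ] ℝ) : ∃ T, f (allocD V w p T) ≤ f y := by
  set a : Fin m → ℝ := fun i => f fun j => if i = j then 1 else 0
  refine ⟨({i | a i < 0} : Finset (Fin m)), ?_⟩
  simp only [f.pi_apply_eq_sum_univ (allocD V w p _), f.pi_apply_eq_sum_univ y, smul_eq_mul]
  refine Finset.sum_le_sum fun i _ => ?_
  by_cases hi : a i < 0
  · have hiT : i ∈ ({i | a i < 0} : Finset (Fin m)) := by simpa using hi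
    exact mul_le_mul_of_nonpos_right ((hyx i).trans (allocD_univ_le V w p hw hiT)) hi.le
  · have hiT : i ∉ ({i | a i < 0} : Finset (Fin m)) := by simpa using hi
    rw [allocD_eq_zero_of_notMem V w p hiT, zero_mul]
    exact mul_nonneg (hy0 i) (not_lt.1 hi)

theorem mem_convexHull_allocD (hw : ∀ t, 0 ≤ w t) {y : Fin m → ℝ} (hy0 : ∀ j, 0 ≤ y j)
    (hyx : ∀ j, y j ≤ allocD V w p Finset.univ j) :
    y ∈ convexHull ℝ (Set.range (allocD V w p)) :=
  mem_convexHull_range_of_forall_exists_le fun f =>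
    exists_allocD_le_of_le_allocD_univ V w p hw hy0 hyx f.toLinearMap

end Pricing

theorem stmt1_general {m k : ℕ} (V : Fin k → Fin m → ℝ) (w : Fin k → ℝ)
    (hw : ∀ t, 0 ≤ w t)
    (p : Fin m → ℝ) (y : Fin m → ℝ)
    (hy0 : ∀ j, 0 ≤ y j) (hyx : ∀ j, y j ≤ allocD V w p Finset.univ j) :
    ∃ β : Finset (Fin m) → ℝ,
      (∀ T, 0 ≤ β T) ∧
      (∑ T ∈ (Finset.univ : Finset (Fin m)).powerset, β T) = 1 ∧
      (∀ j, ∑ T ∈ (Finset.univ : Finset (Fin m)).powerset, β T * allocD V w p T j = y j) ∧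
      (∑ T ∈ (Finset.univ : Finset (Fin m)).powerset, β T * revD V w p T
        = ∑ j, y j * p j) := by
  obtain ⟨β, hβ0, hβ1, hβy⟩ :=
    exists_weights_of_mem_convexHull_range (mem_convexHull_allocD V w p hw hy0 hyx)
  have halloc : ∀ j, ∑ T, β T * allocD V w p T j = y j := fun j => by
    simpa using congrFun hβy j
  refine ⟨β, hβ0, by rwa [Finset.powerset_univ], by rwa [Finset.powerset_univ], ?_⟩
  simp_rw [Finset.powerset_univ, revD_eq_sum_allocD_mul, Finset.mul_sum, ← mul_assoc]
  rw [Finset.sum_comm]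
  simp_rw [← Finset.sum_mul, halloc]

/-- for any `y` componentwise below the allocation vector `x*` of the
deterministic item pricing `p` (all items available), there is a randomized item
pricing — a distribution (weights `β`) over the restrictions `p_T` of `p` to subsets
`T ⊆ [m]` — whose expected allocation is exactly `y` and whose expected revenue is
exactly `y · p`. -/
theorem stmt1 {m k : ℕ} (V : Fin k → Fin m → ℝ) (w : Fin k → ℝ)
    (hw : ∀ t, 0 ≤ w t) (hw1 : ∑ t, w t = 1)
    (p : Fin m → ℝ) (y : Fin m → ℝ)
    (hy0 : ∀ j, 0 ≤ y j) (hyx : ∀ j, y j ≤ allocD V w p Finset.univ j) :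
    ∃ β : Finset (Fin m) → ℝ,
      (∀ T, 0 ≤ β T) ∧
      (∑ T ∈ (Finset.univ : Finset (Fin m)).powerset, β T) = 1 ∧
      (∀ j, ∑ T ∈ (Finset.univ : Finset (Fin m)).powerset, β T * allocD V w p T j = y j) ∧
      (∑ T ∈ (Finset.univ : Finset (Fin m)).powerset, β T * revD V w p T
        = ∑ j, y j * p j) :=
  stmt1_general V w hw p y hy0 hyx
end

section
/- For a unit-demand buyer, any vector y with 0 ≤ y ≤ x* componentwise, where x* is the allocation vector of a deterministic item pricing p under available set S, lies in the convex hull of the finite set {x_T : T ⊆ S} of allocation vectors of the restrictions of p to subsets T of S (together with the zero vector x_∅). -/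
open scoped Classical

/-- Allocation vector of pricing `p` restricted to available set `T`. -/
noncomputable def allocVec {m k : ℕ} (V : Fin k → Fin m → ℝ) (w : Fin k → ℝ)
    (p : Fin m → ℝ) (T : Finset (Fin m)) : Fin m → ℝ :=
  fun j => ∑ t, w t * (if Buys (V t) p T j then (1 : ℝ) else 0)

/-!
Induction on `S`. If `0 ≤ y ≤ x_S` and `y ≠ x_S`, let `c < 1` be the least ratio `y_i / x_S(i)`
over `i ∈ S`. Then `y = c x_S + (1 - c) z` with `z = (y - c x_S) / (1 - c)`, and `z` vanishes
at `i`, so `0 ≤ z ≤ x_S ≤ x_{S \ i}` on `S \ i` by monotonicity of allocations; the induction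
hypothesis puts `z` in the hull of `{x_T : T ⊆ S \ i}`.
-/

/-- The junk value `y i / 0 = 0` is harmless here: `x i = 0` forces `y i = 0`. -/
lemma exists_mem_div_smul_le {ι : Type*} {S : Finset ι} (hS : S.Nonempty) {x y : ι → ℝ}
    (hy0 : 0 ≤ y) (hyx : y ≤ x) (hx : ∀ j ∉ S, x j = 0) :
    ∃ i ∈ S, (y i / x i) • x ≤ y ∧ y i / x i * x i = y i := by
  obtain ⟨i, hiS, hmin⟩ := S.exists_min_image (fun j => y j / x j) hS
  refine ⟨i, hiS, fun j => ?_, ?_⟩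
  · rcases (hy0 j).trans (hyx j) |>.eq_or_lt with hxj | hxj
    · simpa [← hxj] using hy0 j
    · have hjS : j ∈ S := by_contra fun hj => hxj.ne' (hx j hj)
      calc y i / x i * x j ≤ y j / x j * x j :=
            mul_le_mul_of_nonneg_right (hmin j hjS) hxj.le
        _ = y j := div_mul_cancel₀ _ hxj.ne'
  · rcases eq_or_ne (x i) 0 with hxi | hxi
    · have hyi : y i = 0 := le_antisymm (by simpa [hxi] using hyx i) (hy0 i)
      simp [hxi, hyi]
    · exact div_mul_cancel₀ _ hxi

section DownwardClosed

variable {ι : Type*} [DecidableEq ι] (x : Finset ι → ι → ℝ)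

variable {x} in
lemma exists_erase_mem_segment (hsupp : ∀ T, ∀ j ∉ T, x T j = 0)
    (hanti : ∀ T S, T ⊆ S → ∀ j ∈ T, x S j ≤ x T j) {S : Finset ι} {y : ι → ℝ}
    (hy0 : 0 ≤ y) (hyx : y ≤ x S) (hyS : ∀ j ∉ S, y j = 0) (hy : y ≠ x S) :
    ∃ i ∈ S, ∃ z, 0 ≤ z ∧ z ≤ x (S.erase i) ∧ (∀ j ∉ S.erase i, z j = 0) ∧
      y ∈ segment ℝ (x S) z := by
  obtain ⟨j₀, hj₀⟩ : ∃ j, y j < x S j := by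
    by_contra! h
    exact hy (funext fun j => (hyx j).antisymm (h j))
  have hj₀S : j₀ ∈ S := by_contra fun hj => by simp [hyS j₀ hj, hsupp S j₀ hj] at hj₀
  obtain ⟨i, hiS, hle, heq⟩ := exists_mem_div_smul_le ⟨j₀, hj₀S⟩ hy0 hyx (hsupp S)
  set c := y i / x S i
  have hc0 : 0 ≤ c := div_nonneg (hy0 i) ((hy0 i).trans (hyx i))
  have hc1 : c < 1 := by
    have hxj₀ : 0 < x S j₀ := (hy0 j₀).trans_lt hj₀
    nlinarith [show c * x S j₀ ≤ y j₀ from hle j₀]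
  set z := (1 - c)⁻¹ • (y - c • x S)
  have hz : ∀ j, z j = (y j - c * x S j) / (1 - c) := fun j => by
    simp [z, div_eq_inv_mul]
  have hzS : ∀ j ∉ S.erase i, z j = 0 := fun j hj => by
    rw [hz]
    rcases eq_or_ne j i with rfl | hji
    · simp [heq]
    · have hjS : j ∉ S := fun h => hj (Finset.mem_erase.mpr ⟨hji, h⟩)
      simp [hyS j hjS, hsupp S j hjS]
  refine ⟨i, hiS, z, fun j => ?_, fun j => ?_, hzS, c, 1 - c, hc0, by linarith, by ring, ?_⟩
  · rw [hz]; exact div_nonneg (sub_nonneg.mpr (hle j)) (by linarith)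
  · by_cases hj : j ∈ S.erase i
    · calc z j ≤ x S j := by
            rw [hz, div_le_iff₀ (by linarith)]; nlinarith [hyx j]
        _ ≤ x (S.erase i) j := hanti _ _ (S.erase_subset i) j hj
    · rw [hzS j hj, hsupp _ j hj]
  · rw [smul_smul, mul_inv_cancel₀ (by linarith), one_smul, add_sub_cancel]

theorem mem_convexHull_of_le_of_antitone (hsupp : ∀ T, ∀ j ∉ T, x T j = 0)
    (hanti : ∀ T S, T ⊆ S → ∀ j ∈ T, x S j ≤ x T j) (S : Finset ι) (y : ι → ℝ)
    (hy0 : 0 ≤ y) (hyx : y ≤ x S) (hyS : ∀ j ∉ S, y j = 0) :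
    y ∈ convexHull ℝ {z | ∃ T ⊆ S, z = x T} := by
  induction S using Finset.strongInduction generalizing y with
  | H S ih =>
  have hxS : x S ∈ convexHull ℝ {z | ∃ T ⊆ S, z = x T} :=
    subset_convexHull ℝ _ ⟨S, subset_rfl, rfl⟩
  by_cases hy : y = x S
  · exact hy ▸ hxS
  obtain ⟨i, hiS, z, hz0, hzx, hzS, hyz⟩ := exists_erase_mem_segment hsupp hanti hy0 hyx hyS hy
  have hz : z ∈ convexHull ℝ {z | ∃ T ⊆ S, z = x T} :=
    convexHull_mono (fun _ ⟨T, hT, h⟩ => ⟨T, hT.trans (S.erase_subset i), h⟩ :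
        {z | ∃ T ⊆ S.erase i, z = x T} ⊆ {z | ∃ T ⊆ S, z = x T})
      (ih _ (S.erase_ssubset hiS) z hz0 hzx hzS)
  exact (convex_convexHull ℝ _).segment_subset hxS hz hyz

end DownwardClosed

lemma Buys.mono {m : ℕ} {v p : Fin m → ℝ} {T S : Finset (Fin m)} {j : Fin m}
    (h : Buys v p S j) (hTS : T ⊆ S) (hj : j ∈ T) : Buys v p T j :=
  ⟨hj, h.2.1, fun k hk => h.2.2 k (hTS hk)⟩

lemma allocVec_of_notMem {m k : ℕ} (V : Fin k → Fin m → ℝ) (w : Fin k → ℝ)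
    (p : Fin m → ℝ) {T : Finset (Fin m)} {j : Fin m} (hj : j ∉ T) :
    allocVec V w p T j = 0 :=
  Finset.sum_eq_zero fun t _ => by simp [show ¬ Buys (V t) p T j from fun h => hj h.1]

lemma allocVec_anti {m k : ℕ} (V : Fin k → Fin m → ℝ) {w : Fin k → ℝ}
    (hw : ∀ t, 0 ≤ w t) (p : Fin m → ℝ) {T S : Finset (Fin m)} (hTS : T ⊆ S)
    {j : Fin m} (hj : j ∈ T) :
    allocVec V w p S j ≤ allocVec V w p T j := by
  refine Finset.sum_le_sum fun t _ => mul_le_mul_of_nonneg_left ?_ (hw t)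
  by_cases h : Buys (V t) p S j
  · simp [h, h.mono hTS hj]
  · simp only [h, if_false]
    split_ifs <;> norm_num

theorem stmt2_general {m k : ℕ} (V : Fin k → Fin m → ℝ) (w : Fin k → ℝ)
    (hw : ∀ t, 0 ≤ w t)
    (p : Fin m → ℝ) (S : Finset (Fin m)) (y : Fin m → ℝ)
    (hy0 : ∀ j, 0 ≤ y j) (hyx : ∀ j, y j ≤ allocVec V w p S j)
    (hyS : ∀ j ∉ S, y j = 0) :
    y ∈ convexHull ℝ {z : Fin m → ℝ | ∃ T ⊆ S, z = allocVec V w p T} :=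
  mem_convexHull_of_le_of_antitone (allocVec V w p)
    (fun _ _ hj => allocVec_of_notMem V w p hj)
    (fun _ _ hTS _ hj => allocVec_anti V hw p hTS hj) S y hy0 hyx hyS

/-- any `y` with `0 ≤ y ≤ x_S` componentwise (and `y j = 0` for `j ∉ S`),
where `x_S` is the allocation vector of the deterministic item pricing `p` under
available set `S`, lies in the convex hull of the allocation vectors `{x_T : T ⊆ S}`
of the restrictions of `p` to subsets of `S`. -/
theorem stmt2 {m k : ℕ} (V : Fin k → Fin m → ℝ) (w : Fin k → ℝ)
    (hw : ∀ t, 0 ≤ w t) (hw1 : ∑ t, w t = 1)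
    (p : Fin m → ℝ) (S : Finset (Fin m)) (y : Fin m → ℝ)
    (hy0 : ∀ j, 0 ≤ y j) (hyx : ∀ j, y j ≤ allocVec V w p S j)
    (hyS : ∀ j ∉ S, y j = 0) :
    y ∈ convexHull ℝ {z : Fin m → ℝ | ∃ T ⊆ S, z = allocVec V w p T} :=
  stmt2_general V w hw p S y hy0 hyx hyS
end

section
/- (Single-buyer profit approximation) For any single unit-demand buyer with value distribution D over m items (finite support) and any production-cost vector c ∈ ℝ_{≥0}^m, the optimal expected profit achievable by any buy-many mechanism under doubled costs 2c is at most 2 ln(4m) times the optimal expected profit achievable by a deterministic item pricing under costs c: BuyManyProfit_{2c}(D) ≤ 2 ln(4m) · SProfit_c(D). -/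
/-! The item pricings `ξ • p̂ + c` (with `p̂ = phat p`) interpolate between two regimes. At
`ξ = 1` each item costs at least its price under `p` plus its cost, so no buyer gets more
utility than under `p`. At `ξ = 1 / 4m`, buying item by item according to the lottery `Λ` that
the buyer chooses under `p` leaves her at least `3/4 p(Λ) - c ⬝ Λ` more, because
`Λ ⬝ p̂ ≤ m p(Λ)`. Raising all prices by a factor `r` lowers the buyer's utility by at most
`r - 1` times the seller's profit at the lower prices, so along a geometric grid of `N` steps
with `r ^ N = 4m` the profits add up to at least `(3/4 p(Λ) - c ⬝ Λ) / (r - 1)`. With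
`ln 4m ≤ N (r - 1) ≤ 3/2 ln 4m`, the best grid point wins, after doubling the costs, the
factor `2 ln 4m`. -/

open scoped Classical

/-- A lottery over `m` items: a sub-probability vector. -/
def IsLottery {m : ℕ} (lam : Fin m → ℝ) : Prop :=
  (∀ j, 0 ≤ lam j) ∧ ∑ j, lam j ≤ 1

/-- `phat p i`: the cheapest per-unit cost of obtaining item `i` from pricing `p`
by (repeatedly) purchasing a lottery containing it. -/
noncomputable def phat {m : ℕ} (p : (Fin m → ℝ) → ℝ) (i : Fin m) : ℝ :=
  sInf {r | ∃ lam, IsLottery lam ∧ 0 < lam i ∧ r = p lam / lam i}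

/-- The buy-many constraint for a pricing function on lotteries. -/
def BuyMany {m : ℕ} (p : (Fin m → ℝ) → ℝ) : Prop :=
  ∀ lam, IsLottery lam → p lam ≤ ∑ i, lam i * phat p i

open Finset

section Lottery

variable {m : ℕ}

lemma isLottery_zero : IsLottery (fun _ : Fin m => (0 : ℝ)) := ⟨fun _ => le_rfl, by simp⟩

lemma isLottery_single (j : Fin m) : IsLottery (Pi.single j 1 : Fin m → ℝ) :=
  ⟨fun i => by rw [Pi.single_apply]; split_ifs <;> norm_num, by simp⟩

variable {p : (Fin m → ℝ) → ℝ}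

lemma phat_le_div (hpnn : ∀ lam, IsLottery lam → 0 ≤ p lam) {lam : Fin m → ℝ}
    (hl : IsLottery lam) {j : Fin m} (hj : 0 < lam j) : phat p j ≤ p lam / lam j := by
  refine csInf_le ⟨0, ?_⟩ ⟨lam, hl, hj, rfl⟩
  rintro _ ⟨mu, hmu, hpos, rfl⟩
  exact div_nonneg (hpnn mu hmu) hpos.le

lemma phat_nonneg (hpnn : ∀ lam, IsLottery lam → 0 ≤ p lam) (j : Fin m) : 0 ≤ phat p j := by
  refine Real.sInf_nonneg ?_
  rintro _ ⟨lam, hl, hpos, rfl⟩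
  exact div_nonneg (hpnn lam hl) hpos.le

lemma mul_phat_le (hpnn : ∀ lam, IsLottery lam → 0 ≤ p lam) {lam : Fin m → ℝ}
    (hl : IsLottery lam) (j : Fin m) : lam j * phat p j ≤ p lam := by
  rcases (hl.1 j).eq_or_lt with hj | hj
  · rw [← hj, zero_mul]
    exact hpnn lam hl
  · exact (le_div_iff₀' hj).1 (phat_le_div hpnn hl hj)

lemma sum_mul_phat_le (hpnn : ∀ lam, IsLottery lam → 0 ≤ p lam) {lam : Fin m → ℝ}
    (hl : IsLottery lam) : ∑ j, lam j * phat p j ≤ m * p lam := by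
  simpa using sum_le_card_nsmul univ _ _ fun j _ => mul_phat_le hpnn hl j

lemma BuyMany.apply_single_le (hbm : BuyMany p) (j : Fin m) : p (Pi.single j 1) ≤ phat p j := by
  simpa [Pi.single_apply] using hbm _ (isLottery_single j)

end Lottery

section Gain

variable {ι : Type*}

/-- A buyer with values `v` facing item prices `q` gets utility `gain v q o` from the choice `o`
(`none`: buy nothing); a seller with costs `c` makes profit `gain q c o` from it. -/
def gain (a b : ι → ℝ) (o : Option ι) : ℝ := o.elim 0 fun j => a j - b j

@[simp] lemma gain_none (a b : ι → ℝ) : gain a b none = 0 := rfl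

@[simp] lemma gain_some (a b : ι → ℝ) (j : ι) : gain a b (some j) = a j - b j := rfl

lemma elim_iff_forall_gain_le (v q : ι → ℝ) (o : Option ι) :
    o.elim (∀ i, v i - q i ≤ 0) (fun j => 0 ≤ v j - q j ∧ ∀ i, v i - q i ≤ v j - q j) ↔
      ∀ o', gain v q o' ≤ gain v q o := by
  cases o <;> simp [Option.forall]

lemma gain_sub_gain_le {v q q' : ι → ℝ} {o : Option ι} (hbest : ∀ o', gain v q' o' ≤ gain v q' o)
    (o' : Option ι) : gain v q o' - gain v q' o ≤ gain q' q o' := by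
  have := hbest o'
  cases o' <;> simp only [gain_none, gain_some] at this ⊢ <;> linarith

def scaledPrice (a c : ι → ℝ) (ξ : ℝ) : ι → ℝ := fun j => ξ * a j + c j

lemma gain_scaledPrice_scaledPrice (a c : ι → ℝ) (ξ ξ' : ℝ) (o : Option ι) :
    gain (scaledPrice a c ξ') (scaledPrice a c ξ) o = (ξ' - ξ) * gain a 0 o := by
  cases o <;> simp [scaledPrice]
  ring

lemma gain_scaledPrice_left (a c : ι → ℝ) (ξ : ℝ) (o : Option ι) :
    gain (scaledPrice a c ξ) c o = ξ * gain a 0 o := by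
  cases o <;> simp [scaledPrice]

end Gain

lemma sum_mul_sub_le_gain {m : ℕ} {v q lam : Fin m → ℝ} (hl : IsLottery lam) {o : Option (Fin m)}
    (hbest : ∀ o', gain v q o' ≤ gain v q o) : ∑ j, lam j * (v j - q j) ≤ gain v q o :=
  calc ∑ j, lam j * (v j - q j) ≤ ∑ j, lam j * gain v q o :=
        sum_le_sum fun j _ => mul_le_mul_of_nonneg_left (hbest (some j)) (hl.1 j)
    _ = (∑ j, lam j) * gain v q o := (sum_mul ..).symm
    _ ≤ gain v q o := mul_le_of_le_one_left (hbest none) hl.2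

section Buyer

variable {m : ℕ} {p : (Fin m → ℝ) → ℝ} {v Λ c : Fin m → ℝ}

lemma gain_scaledPrice_one_le (hp0 : p (fun _ => 0) = 0) (hbm : BuyMany p) (hc : ∀ j, 0 ≤ c j)
    (hopt : ∀ mu, IsLottery mu → (∑ j, v j * mu j) - p mu ≤ (∑ j, v j * Λ j) - p Λ)
    (o : Option (Fin m)) : gain v (scaledPrice (phat p) c 1) o ≤ (∑ j, v j * Λ j) - p Λ := by
  cases o with
  | none => simpa [hp0] using hopt _ isLottery_zero
  | some j =>
    have hj := hopt _ (isLottery_single j)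
    simp only [Pi.single_apply, mul_ite, mul_one, mul_zero, sum_ite_eq', mem_univ, if_true] at hj
    have := hbm.apply_single_le j
    simp only [gain_some, scaledPrice, one_mul]
    linarith [hc j]

lemma sub_sub_mul_le_gain_scaledPrice (hpnn : ∀ lam, IsLottery lam → 0 ≤ p lam)
    (hΛ : IsLottery Λ) {ξ : ℝ} (hξ : 0 ≤ ξ) {o : Option (Fin m)}
    (hbest : ∀ o', gain v (scaledPrice (phat p) c ξ) o' ≤ gain v (scaledPrice (phat p) c ξ) o) :
    (∑ j, v j * Λ j) - ∑ j, c j * Λ j - ξ * m * p Λ ≤ gain v (scaledPrice (phat p) c ξ) o := by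
  have hsum : ∑ j, Λ j * (v j - scaledPrice (phat p) c ξ j) =
      (∑ j, v j * Λ j) - ∑ j, c j * Λ j - ξ * ∑ j, Λ j * phat p j := by
    simp only [scaledPrice, mul_sum, ← sum_sub_distrib]
    exact sum_congr rfl fun j _ => by ring
  have := mul_le_mul_of_nonneg_left (sum_mul_phat_le hpnn hΛ) hξ
  have := sum_mul_sub_le_gain hΛ hbest
  linarith

lemma three_quarters_sub_cost_le_sum_gain (hm : 1 ≤ m) (hp0 : p (fun _ => 0) = 0)
    (hpnn : ∀ lam, IsLottery lam → 0 ≤ p lam) (hbm : BuyMany p) (hc : ∀ j, 0 ≤ c j)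
    (hΛ : IsLottery Λ)
    (hopt : ∀ mu, IsLottery mu → (∑ j, v j * mu j) - p mu ≤ (∑ j, v j * Λ j) - p Λ)
    {N : ℕ} {r : ℝ} (hrN : r ^ N = 4 * m) {sel : ℕ → Option (Fin m)}
    (hsel : ∀ i o, gain v (scaledPrice (phat p) c (r ^ i / (4 * m))) o ≤
      gain v (scaledPrice (phat p) c (r ^ i / (4 * m))) (sel i)) :
    3 / 4 * p Λ - ∑ j, c j * Λ j ≤
      (r - 1) * ∑ i ∈ range N, gain (scaledPrice (phat p) c (r ^ i / (4 * m))) c (sel i) := by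
  have hm' : (0 : ℝ) < m := by exact_mod_cast hm
  set ξ : ℕ → ℝ := fun i => r ^ i / (4 * m) with hξ
  set U : ℕ → ℝ := fun i => gain v (scaledPrice (phat p) c (ξ i)) (sel i) with hU
  have hU0 : (∑ j, v j * Λ j) - ∑ j, c j * Λ j - 1 / 4 * p Λ ≤ U 0 := by
    have hξ0 : ξ 0 * m = 1 / 4 := by simp only [hξ, pow_zero]; field_simp
    have h := sub_sub_mul_le_gain_scaledPrice hpnn hΛ (ξ := ξ 0) (by positivity) (hsel 0)
    rwa [hξ0] at h
  have hUN : U N ≤ (∑ j, v j * Λ j) - p Λ := by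
    have hξN : ξ N = 1 := by simp [hξ, hrN, hm'.ne']
    simpa only [hU, hξN] using gain_scaledPrice_one_le hp0 hbm hc hopt (sel N)
  have hstep : ∀ i, U i - U (i + 1) ≤
      (r - 1) * gain (scaledPrice (phat p) c (ξ i)) c (sel i) := by
    intro i
    have hdrop := gain_sub_gain_le (q := scaledPrice (phat p) c (ξ i)) (hsel (i + 1)) (sel i)
    rw [gain_scaledPrice_scaledPrice] at hdrop
    rw [gain_scaledPrice_left]
    have hgrid : ξ (i + 1) - ξ i = (r - 1) * ξ i := by simp only [hξ, pow_succ]; ring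
    rw [hgrid] at hdrop
    linarith
  calc 3 / 4 * p Λ - ∑ j, c j * Λ j ≤ U 0 - U N := by linarith
    _ = ∑ i ∈ range N, (U i - U (i + 1)) := (sum_range_sub' U N).symm
    _ ≤ ∑ i ∈ range N, (r - 1) * gain (scaledPrice (phat p) c (ξ i)) c (sel i) :=
        sum_le_sum fun i _ => hstep i
    _ = _ := (mul_sum ..).symm

end Buyer

lemma exists_pow_eq_and_log_le_mul_sub_one {x : ℝ} (hx : 1 < x) :
    ∃ (N : ℕ) (r : ℝ), r ^ N = x ∧ Real.log x ≤ N * (r - 1) ∧ N * (r - 1) ≤ 3 / 2 * Real.log x := by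
  set S := Real.log x
  have hS : 0 < S := Real.log_pos hx
  set N := ⌈2 * S⌉₊
  have hN : 2 * S ≤ N := Nat.le_ceil _
  have hNpos : (0 : ℝ) < N := by linarith
  set h := S / N
  have hh : 0 < h := div_pos hS hNpos
  have hh2 : h ≤ 1 / 2 := by rw [div_le_iff₀ hNpos]; linarith
  have hNh : N * h = S := mul_div_cancel₀ _ hNpos.ne'
  refine ⟨N, Real.exp h, ?_, ?_, ?_⟩
  · rw [← Real.exp_nat_mul, hNh, Real.exp_log (by linarith)]
  · nlinarith [Real.add_one_le_exp h]
  · have hexp := (abs_le.1 (Real.abs_exp_sub_one_sub_id_le (by rw [abs_of_pos hh]; linarith))).2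
    nlinarith

lemma sum_mul_sub_two_mul_le {ι : Type*} (s : Finset ι) {w P C : ι → ℝ} {S K G : ℝ}
    (hw : ∀ t ∈ s, 0 ≤ w t) (hP : ∀ t ∈ s, 0 ≤ P t) (hC : ∀ t ∈ s, 0 ≤ C t)
    (hSK : S ≤ K) (hKS : K ≤ 3 / 2 * S) (hK : 0 < K)
    (h : ∑ t ∈ s, w t * (3 / 4 * P t - C t) ≤ K * G) :
    ∑ t ∈ s, w t * (P t - 2 * C t) ≤ 2 * S * G := by
  refine le_of_mul_le_mul_left ?_ hK
  calc K * ∑ t ∈ s, w t * (P t - 2 * C t)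
      ≤ ∑ t ∈ s, 2 * S * (w t * (3 / 4 * P t - C t)) := by
        rw [mul_sum]
        refine sum_le_sum fun t ht => ?_
        have := mul_nonneg (hw t ht) (hP t ht)
        have := mul_nonneg (hw t ht) (hC t ht)
        nlinarith
    _ = 2 * S * ∑ t ∈ s, w t * (3 / 4 * P t - C t) := (mul_sum ..).symm
    _ ≤ 2 * S * (K * G) := by gcongr; linarith
    _ = K * (2 * S * G) := by ring

theorem stmt10_general {m k : ℕ} (hm : 1 ≤ m)
    (V : Fin k → Fin m → ℝ) (w : Fin k → ℝ)
    (hw : ∀ t, 0 ≤ w t)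
    (c : Fin m → ℝ) (hc : ∀ j, 0 ≤ c j)
    (p : (Fin m → ℝ) → ℝ)
    (hp0 : p (fun _ => 0) = 0)
    (hpnn : ∀ lam, IsLottery lam → 0 ≤ p lam)
    (hbm : BuyMany p)
    (Λ : Fin k → Fin m → ℝ) (hΛ : ∀ t, IsLottery (Λ t))
    (hargmax : ∀ t mu, IsLottery mu →
      (∑ j, V t j * mu j) - p mu ≤ (∑ j, V t j * Λ t j) - p (Λ t)) :
    ∃ (q : Fin m → ℝ) (sel : Fin k → Option (Fin m)),
      (∀ t : Fin k, (sel t).elim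
        (∀ i, V t i - q i ≤ 0)
        (fun j => 0 ≤ V t j - q j ∧ ∀ i, V t i - q i ≤ V t j - q j)) ∧
      ∑ t, w t * (p (Λ t) - 2 * ∑ j, c j * Λ t j)
        ≤ 2 * Real.log (4 * m) *
            ∑ t, w t * (sel t).elim 0 (fun j => q j - c j) := by
  have h4m : (1 : ℝ) < 4 * m := by
    have : (1 : ℝ) ≤ m := by exact_mod_cast hm
    linarith
  obtain ⟨N, r, hrN, hSK, hKS⟩ := exists_pow_eq_and_log_le_mul_sub_one h4m
  have hK : 0 < N * (r - 1) := (Real.log_pos h4m).trans_le hSK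
  set q : ℕ → Fin m → ℝ := fun i => scaledPrice (phat p) c (r ^ i / (4 * m))
  choose sel hsel using fun i t => Finite.exists_max (gain (V t) (q i))
  set G : ℕ → ℝ := fun i => ∑ t, w t * gain (q i) c (sel i t)
  have hN : (range N).Nonempty := nonempty_range_iff.2 (by rintro rfl; simp at hK)
  obtain ⟨i, -, hi⟩ := exists_max_image (range N) G hN
  refine ⟨q i, sel i, fun t => (elim_iff_forall_gain_le _ _ _).2 (hsel i t), ?_⟩
  have hr : 0 ≤ r - 1 := (pos_of_mul_pos_right hK N.cast_nonneg).le
  have hG : ∑ t, w t * (3 / 4 * p (Λ t) - ∑ j, c j * Λ t j) ≤ N * (r - 1) * G i :=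
    calc ∑ t, w t * (3 / 4 * p (Λ t) - ∑ j, c j * Λ t j)
        ≤ ∑ t, w t * ((r - 1) * ∑ n ∈ range N, gain (q n) c (sel n t)) :=
          sum_le_sum fun t _ => mul_le_mul_of_nonneg_left
            (three_quarters_sub_cost_le_sum_gain hm hp0 hpnn hbm hc (hΛ t) (hargmax t) hrN
              (fun n => hsel n t)) (hw t)
      _ = (r - 1) * ∑ n ∈ range N, G n := by
          simp only [G, mul_sum, mul_left_comm (w _)]
          exact sum_comm
      _ ≤ (r - 1) * (N * G i) := by
          gcongr
          simpa using sum_le_card_nsmul _ _ _ hi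
      _ = N * (r - 1) * G i := by ring
  exact sum_mul_sub_two_mul_le univ (fun t _ => hw t) (fun t _ => hpnn _ (hΛ t))
    (fun t _ => sum_nonneg fun j _ => mul_nonneg (hc j) ((hΛ t).1 j)) hSK hKS hK hG

/-- single-buyer profit approximation: for a unit-demand buyer with a
finite-support value distribution (types `V` with weights `w`) over `m` items and
production costs `c ≥ 0`, the expected profit of any buy-many mechanism `p` under
doubled costs `2c` is at most `2 ln(4m)` times the expected profit of some
deterministic item pricing `q` (with a utility-maximizing selection rule `sel`)
under costs `c`. -/
theorem stmt10 {m k : ℕ} (hm : 1 ≤ m)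
    (V : Fin k → Fin m → ℝ) (w : Fin k → ℝ)
    (hw : ∀ t, 0 ≤ w t) (hw1 : ∑ t, w t = 1)
    (hV : ∀ t j, 0 ≤ V t j)
    (c : Fin m → ℝ) (hc : ∀ j, 0 ≤ c j)
    (p : (Fin m → ℝ) → ℝ)
    (hp0 : p (fun _ => 0) = 0)
    (hpnn : ∀ lam, IsLottery lam → 0 ≤ p lam)
    (hbm : BuyMany p)
    (Λ : Fin k → Fin m → ℝ) (hΛ : ∀ t, IsLottery (Λ t))
    (hargmax : ∀ t mu, IsLottery mu →
      (∑ j, V t j * mu j) - p mu ≤ (∑ j, V t j * Λ t j) - p (Λ t)) :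
    ∃ (q : Fin m → ℝ) (sel : Fin k → Option (Fin m)),
      (∀ t : Fin k, (sel t).elim
        (∀ i, V t i - q i ≤ 0)
        (fun j => 0 ≤ V t j - q j ∧ ∀ i, V t i - q i ≤ V t j - q j)) ∧
      ∑ t, w t * (p (Λ t) - 2 * ∑ j, c j * Λ t j)
        ≤ 2 * Real.log (4 * m) *
            ∑ t, w t * (sel t).elim 0 (fun j => q j - c j) :=
  stmt10_general hm V w hw c hc p hp0 hpnn hbm Λ hΛ hargmax
end
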